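/- Let K be a natural number, let J be an index set, let {L_j}_{j∈J} be a partition of a set L into pairwise disjoint pieces, let {M_j}_{j∈J} be pairwise disjoint finite sets, and for each j let A_j ⊆ L_j × M_j be an edge relation such that every subset S ⊆ L_j with |S| ≤ K satisfies |A_j(S)| ≥ |S|. Let A = ⋃_{j∈J} A_j, viewed as a relation between L and M = ⋃_{j∈J} M_j. Then every finite subset S ⊆ L satisfies |A(S)| ≥ min(|S|, K). -/
import Mathlib


/-- The set of neighbors of a set `S` of left vertices in the bipartite graph
with edge relation `A`. -/
def nbhd {α β : Type*} (A : Set (α × β)) (S : Set α) : Set β :=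
  {y | ∃ x ∈ S, (x, y) ∈ A}

lemma nbhd_mono {α β : Type*} {A : Set (α × β)} {S T : Set α} (h : S ⊆ T) :
    nbhd A S ⊆ nbhd A T := fun y ⟨x, hx, hxy⟩ => ⟨x, h hx, hxy⟩

/-- merging per-piece expanders: let `{Lp j}` be a partition of `L`
into pairwise disjoint pieces, `{M j}` pairwise disjoint finite sets, and for each `j`
let `A j ⊆ Lp j × M j` be such that every finite `S ⊆ Lp j` with `|S| ≤ K` has
`|A_j(S)| ≥ |S|`.  Then the union relation satisfies `|A(S)| ≥ min(|S|, K)` for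
every finite `S`. -/
theorem stmt_5 {α β J : Type} (K : ℕ)
    (Lp : J → Set α) (hLcover : ∀ x, ∃ j, x ∈ Lp j)
    (hLdisj : ∀ i j, i ≠ j → Disjoint (Lp i) (Lp j))
    (M : J → Set β) (hMfin : ∀ j, (M j).Finite)
    (hMdisj : ∀ i j, i ≠ j → Disjoint (M i) (M j))
    (A : J → Set (α × β))
    (hA : ∀ j, ∀ p ∈ A j, p.1 ∈ Lp j ∧ p.2 ∈ M j)
    (hexp : ∀ j, ∀ S ⊆ Lp j, S.Finite → S.ncard ≤ K →
      S.ncard ≤ (nbhd (A j) S).ncard) :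
    ∀ S : Set α, S.Finite → min S.ncard K ≤ (nbhd (⋃ j, A j) S).ncard := by
  classical
  -- finiteness of neighborhoods of finite sets
  have hfin : ∀ T : Set α, T.Finite → (nbhd (⋃ j, A j) T).Finite := by
    intro T hT
    set f : α → J := fun x => Classical.choose (hLcover x) with hf
    have hfx : ∀ x, x ∈ Lp (f x) := fun x => Classical.choose_spec (hLcover x)
    have hsub : nbhd (⋃ j, A j) T ⊆ ⋃ x ∈ hT.toFinset, M (f x) := by
      rintro y ⟨x, hx, hxy⟩
      simp only [Set.mem_iUnion] at hxy
      obtain ⟨i, hi⟩ := hxy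
      have h1 := hA i _ hi
      have : i = f x := by
        by_contra hne
        exact (hLdisj i (f x) hne).ne_of_mem h1.1 (hfx x) rfl
      subst this
      simp only [Set.mem_iUnion]
      exact ⟨x, hT.mem_toFinset.mpr hx, h1.2⟩
    exact (Set.Finite.biUnion (Set.finite_mem_finset _) (fun x _ => hMfin (f x))).subset hsub
  -- key induction
  have key : ∀ t : Finset J, ∀ T : Set α, T.Finite → (∀ x ∈ T, ∃ j ∈ t, x ∈ Lp j) →
      T.ncard ≤ K → T.ncard ≤ (nbhd (⋃ j, A j) T).ncard := by
    intro t
    induction t using Finset.induction_on with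
    | empty =>
      intro T hT hcov _
      have : T = ∅ := by
        ext x
        simp only [Set.mem_empty_iff_false, iff_false]
        intro hx
        obtain ⟨j, hj, _⟩ := hcov x hx
        simp at hj
      simp [this]
    | @insert j t' hj IH =>
      intro T hT hcov hK
      set T₁ := T ∩ Lp j with hT₁
      set T₂ := T \ Lp j with hT₂
      have hT₁fin : T₁.Finite := hT.subset Set.inter_subset_left
      have hT₂fin : T₂.Finite := hT.subset Set.diff_subset
      have hcov₂ : ∀ x ∈ T₂, ∃ i ∈ t', x ∈ Lp i := by
        rintro x ⟨hx, hxj⟩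
        obtain ⟨i, hi, hxi⟩ := hcov x hx
        rcases Finset.mem_insert.mp hi with rfl | hi'
        · exact absurd hxi hxj
        · exact ⟨i, hi', hxi⟩
      have hcard : T₁.ncard + T₂.ncard = T.ncard :=
        Set.ncard_inter_add_ncard_diff_eq_ncard T (Lp j) hT
      have h1 : T₁.ncard ≤ (nbhd (A j) T₁).ncard :=
        hexp j T₁ Set.inter_subset_right hT₁fin (by omega)
      have h2 : T₂.ncard ≤ (nbhd (⋃ i, A i) T₂).ncard :=
        IH T₂ hT₂fin hcov₂ (by omega)
      -- the two neighborhood sets are disjoint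
      have hN₁M : nbhd (A j) T₁ ⊆ M j := by
        rintro y ⟨x, hx, hxy⟩
        exact (hA j _ hxy).2
      have hdisj : Disjoint (nbhd (A j) T₁) (nbhd (⋃ i, A i) T₂) := by
        rw [Set.disjoint_left]
        rintro y hy₁ ⟨x, hx, hxy⟩
        simp only [Set.mem_iUnion] at hxy
        obtain ⟨i, hi⟩ := hxy
        have h3 := hA i _ hi
        have hne : i ≠ j := by
          rintro rfl
          exact hx.2 h3.1
        exact (hMdisj i j hne).ne_of_mem h3.2 (hN₁M hy₁) rfl
      have hsub : nbhd (A j) T₁ ∪ nbhd (⋃ i, A i) T₂ ⊆ nbhd (⋃ i, A i) T := by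
        rintro y (⟨x, hx, hxy⟩ | ⟨x, hx, hxy⟩)
        · exact ⟨x, hx.1, Set.mem_iUnion.mpr ⟨j, hxy⟩⟩
        · exact ⟨x, hx.1, hxy⟩
      have hN₁fin : (nbhd (A j) T₁).Finite := (hMfin j).subset hN₁M
      have hN₂fin : (nbhd (⋃ i, A i) T₂).Finite := hfin T₂ hT₂fin
      calc T.ncard = T₁.ncard + T₂.ncard := hcard.symm
        _ ≤ (nbhd (A j) T₁).ncard + (nbhd (⋃ i, A i) T₂).ncard := by omega
        _ = (nbhd (A j) T₁ ∪ nbhd (⋃ i, A i) T₂).ncard :=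
            (Set.ncard_union_eq hdisj hN₁fin hN₂fin).symm
        _ ≤ (nbhd (⋃ i, A i) T).ncard :=
            Set.ncard_le_ncard hsub (hfin T hT)
  -- main argument
  intro S hS
  obtain ⟨S', hS'sub, hS'card⟩ := Set.exists_subset_card_eq (min_le_left S.ncard K)
  have hS'fin : S'.Finite := hS.subset hS'sub
  set f : α → J := fun x => Classical.choose (hLcover x) with hf
  have hfx : ∀ x, x ∈ Lp (f x) := fun x => Classical.choose_spec (hLcover x)
  have hcov : ∀ x ∈ S', ∃ i ∈ hS'fin.toFinset.image f, x ∈ Lp i := by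
    intro x hx
    exact ⟨f x, Finset.mem_image_of_mem f (hS'fin.mem_toFinset.mpr hx), hfx x⟩
  have h := key (hS'fin.toFinset.image f) S' hS'fin hcov (by omega)
  calc min S.ncard K = S'.ncard := hS'card.symm
    _ ≤ (nbhd (⋃ i, A i) S').ncard := h
    _ ≤ (nbhd (⋃ i, A i) S).ncard :=
        Set.ncard_le_ncard (nbhd_mono hS'sub) (hfin S hS)
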